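/- arXiv:1012.2061 — 2 statements merged into one kernel-verified Lean document; each statement's English description precedes it below -/
import Mathlib

section
/- For every real t ≥ 1 one has Σ'_{k∈ℤ², |k|>t} 1/|k|⁴ = π/t² + O(t^{−3}); i.e., there exist constants C, t₀ such that |Σ'_{|k|>t} |k|^{−4} − π t^{−2}| ≤ C t^{−3} for all t ≥ t₀. -/
open Real
open scoped Classical

noncomputable section

/-- `|k|² = k₁² + k₂²` as a real number, for `k ∈ ℤ²`. -/
def ksq (k : ℤ × ℤ) : ℝ := (k.1 : ℝ) ^ 2 + (k.2 : ℝ) ^ 2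

open MeasureTheory Set
open scoped ENNReal

def nsq (x : ℝ × ℝ) : ℝ := x.1 ^ 2 + x.2 ^ 2

lemma nsq_nonneg (x : ℝ × ℝ) : 0 ≤ nsq x := by unfold nsq; positivity

/-- Radial integration formula. -/
lemma radial_int (F : ℝ → ℝ) :
    ∫ x : ℝ × ℝ, F (nsq x) = (2 * π) * ∫ r in Ioi (0:ℝ), r * F (r ^ 2) := by
  rw [← integral_comp_polarCoord_symm (fun x => F (nsq x))]
  have h1 : ∀ p : ℝ × ℝ, p.1 • F (nsq (polarCoord.symm p)) = (p.1 * F (p.1 ^ 2)) * (1:ℝ) := by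
    intro p
    have : nsq (polarCoord.symm p) = p.1 ^ 2 := by
      show (p.1 * cos p.2) ^ 2 + (p.1 * sin p.2) ^ 2 = p.1 ^ 2
      have := sin_sq_add_cos_sq p.2
      nlinarith [this]
    rw [this, smul_eq_mul, mul_one]
  have h2 : polarCoord.target = Ioi (0:ℝ) ×ˢ Ioo (-π) π := rfl
  simp_rw [h1, h2]
  rw [Measure.volume_eq_prod]
  rw [setIntegral_prod_mul (fun r : ℝ => r * F (r ^ 2)) (fun _ : ℝ => (1:ℝ))]
  rw [setIntegral_const]
  rw [measureReal_def, Real.volume_Ioo]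
  rw [ENNReal.toReal_ofReal (by nlinarith [pi_pos] : (0:ℝ) ≤ π - -π)]
  rw [smul_eq_mul]
  ring


def cell (k : ℤ × ℤ) : Set (ℝ × ℝ) :=
  Ico ((k.1:ℝ) - 2⁻¹) ((k.1:ℝ) + 2⁻¹) ×ˢ Ico ((k.2:ℝ) - 2⁻¹) ((k.2:ℝ) + 2⁻¹)

lemma cell_ms (k : ℤ × ℤ) : MeasurableSet (cell k) :=
  measurableSet_Ico.prod measurableSet_Ico

lemma volume_cell (k : ℤ × ℤ) : volume (cell k) = 1 := by
  rw [cell, Measure.volume_eq_prod, Measure.prod_prod, Real.volume_Ico, Real.volume_Ico]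
  norm_num

lemma volume_cell_toReal (k : ℤ × ℤ) : (volume (cell k)).toReal = 1 := by
  rw [volume_cell]; rfl

lemma mem_cell_round (x : ℝ × ℝ) : x ∈ cell (round x.1, round x.2) := by
  constructor <;>
  · simp only [mem_Ico]
    constructor <;>
    · rw [round_eq]
      push_cast
      have h1 := Int.floor_le (x.1 + 1/2)
      have h2 := Int.lt_floor_add_one (x.1 + 1/2)
      have h3 := Int.floor_le (x.2 + 1/2)
      have h4 := Int.lt_floor_add_one (x.2 + 1/2)
      first | linarith | linarith

lemma cell_eq_round {k : ℤ × ℤ} {x : ℝ × ℝ} (h : x ∈ cell k) :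
    k = (round x.1, round x.2) := by
  obtain ⟨h1, h2⟩ := h
  simp only [mem_Ico] at h1 h2
  have e1 : round x.1 = k.1 := by
    rw [round_eq, Int.floor_eq_iff]
    constructor <;> [push_cast; push_cast] <;> linarith
  have e2 : round x.2 = k.2 := by
    rw [round_eq, Int.floor_eq_iff]
    constructor <;> [push_cast; push_cast] <;> linarith
  exact Prod.ext e1.symm e2.symm

lemma iUnion_cell : (⋃ k : ℤ × ℤ, cell k) = univ := by
  ext x
  simp only [mem_iUnion, mem_univ, iff_true]
  exact ⟨(round x.1, round x.2), mem_cell_round x⟩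

lemma cell_disjoint : Pairwise (Function.onFun Disjoint cell) := by
  intro k l hkl
  rw [Function.onFun, Set.disjoint_left]
  intro x hx hx'
  exact hkl ((cell_eq_round hx).trans (cell_eq_round hx').symm)

lemma ksq_eq (k : ℤ × ℤ) : ksq k = nsq ((k.1:ℝ), (k.2:ℝ)) := rfl

/-- distance bound on a cell -/
lemma cell_sqrt_bound {k : ℤ × ℤ} {x : ℝ × ℝ} (h : x ∈ cell k) :
    |Real.sqrt (nsq x) - Real.sqrt (ksq k)| ≤ 1 := by
  obtain ⟨h1, h2⟩ := h
  simp only [mem_Ico] at h1 h2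
  set z : ℂ := ⟨x.1, x.2⟩
  set w : ℂ := ⟨(k.1:ℝ), (k.2:ℝ)⟩
  have hz : Real.sqrt (nsq x) = ‖z‖ := by
    rw [Complex.norm_def, Complex.normSq_mk]; rw [nsq]; ring_nf
  have hw : Real.sqrt (ksq k) = ‖w‖ := by
    rw [Complex.norm_def, Complex.normSq_mk]; rw [ksq]; ring_nf
  rw [hz, hw]
  have htri : |‖z‖ - ‖w‖| ≤ ‖z - w‖ :=
    abs_norm_sub_norm_le z w
  refine htri.trans ?_
  have : ‖z - w‖ ^ 2 ≤ 1 := by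
    rw [Complex.sq_norm, Complex.normSq_apply]
    simp only [Complex.sub_re, Complex.sub_im]
    show (x.1 - (k.1:ℝ)) * (x.1 - (k.1:ℝ)) + (x.2 - (k.2:ℝ)) * (x.2 - (k.2:ℝ)) ≤ 1
    nlinarith
  nlinarith [norm_nonneg (z - w)]

lemma continuous_nsq : Continuous nsq := by
  unfold nsq; fun_prop

def gfun (t : ℝ) (x : ℝ × ℝ) : ℝ := if t ^ 2 < nsq x then ((nsq x) ^ 2)⁻¹ else 0

def hfun (x : ℝ × ℝ) : ℝ := 18 * ((Real.sqrt (nsq x)) ^ 5)⁻¹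

def Aset (t : ℝ) : Set (ℝ × ℝ) := {x | t ≤ Real.sqrt (nsq x)}

def Dset (t : ℝ) : Set (ℝ × ℝ) := {x | t - 2 ≤ Real.sqrt (nsq x) ∧ Real.sqrt (nsq x) ≤ t + 2}

lemma gfun_nonneg (t : ℝ) (x : ℝ × ℝ) : 0 ≤ gfun t x := by
  unfold gfun; split <;> positivity

lemma hfun_nonneg (x : ℝ × ℝ) : 0 ≤ hfun x := by unfold hfun; positivity

lemma measurable_gfun (t : ℝ) : Measurable (gfun t) := by
  unfold gfun
  exact Measurable.ite (measurableSet_lt measurable_const continuous_nsq.measurable)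
    ((continuous_nsq.measurable.pow_const 2).inv) measurable_const

lemma Aset_ms (t : ℝ) : MeasurableSet (Aset t) :=
  measurableSet_le measurable_const (continuous_nsq.sqrt.measurable)

lemma Dset_ms (t : ℝ) : MeasurableSet (Dset t) := by
  have h1 : Dset t = {x | t - 2 ≤ Real.sqrt (nsq x)} ∩ {x | Real.sqrt (nsq x) ≤ t + 2} := rfl
  rw [h1]
  exact (measurableSet_le measurable_const continuous_nsq.sqrt.measurable).inter
    (measurableSet_le continuous_nsq.sqrt.measurable measurable_const)

lemma norm_sq_le_nsq (x : ℝ × ℝ) : ‖x‖ ^ 2 ≤ nsq x := by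
  rw [Prod.norm_def]
  rcases max_cases ‖x.1‖ ‖x.2‖ with ⟨h, _⟩ | ⟨h, _⟩ <;> rw [h] <;>
    simp only [Real.norm_eq_abs, sq_abs] <;> unfold nsq <;> nlinarith [sq_nonneg x.1, sq_nonneg x.2]

lemma norm_le_sqrt_nsq (x : ℝ × ℝ) : ‖x‖ ≤ Real.sqrt (nsq x) := by
  have h := norm_sq_le_nsq x
  nlinarith [Real.sq_sqrt (nsq_nonneg x), Real.sqrt_nonneg (nsq x), norm_nonneg x,
    sq_nonneg (‖x‖ - Real.sqrt (nsq x))]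

lemma integrable_japanese {r : ℝ} (hr : (2:ℝ) < r) :
    Integrable (fun x : ℝ × ℝ => (1 + ‖x‖) ^ (-r)) := by
  apply integrable_one_add_norm
  rw [show (Module.finrank ℝ (ℝ × ℝ) : ℝ) = 2 by norm_num [Module.finrank_prod]]
  exact hr

lemma rpow_neg_nat_eq (a : ℝ) (ha : 0 ≤ a) (n : ℕ) : a ^ (-(n:ℝ)) = (a ^ n)⁻¹ := by
  rw [Real.rpow_neg ha, Real.rpow_natCast]

lemma integrable_gfun {t : ℝ} (ht : 1 ≤ t) : Integrable (gfun t) := by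
  refine Integrable.mono ((integrable_japanese (by norm_num : (2:ℝ) < 4)).const_mul 16)
    ((measurable_gfun t).aestronglyMeasurable) (Filter.Eventually.of_forall fun x => ?_)
  rw [Real.norm_eq_abs, Real.norm_eq_abs, abs_of_nonneg (gfun_nonneg t x)]
  have hb : 0 ≤ (1 + ‖x‖) ^ (-(4:ℝ)) := Real.rpow_nonneg (by positivity) _
  rw [abs_of_nonneg (by positivity)]
  unfold gfun
  split
  · rename_i hx
    have hσ1 : 1 ≤ nsq x := by nlinarith
    have hn2 : ‖x‖ ^ 2 ≤ nsq x := norm_sq_le_nsq x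
    have hpos : (0:ℝ) < 1 + ‖x‖ := by positivity
    rw [show (-(4:ℝ)) = (-((4:ℕ):ℝ)) by norm_num, rpow_neg_nat_eq _ hpos.le]
    rw [← one_div, ← one_div, mul_one_div, div_le_div_iff₀ (by positivity) (by positivity)]
    have h1 : (1 + ‖x‖) ^ 2 ≤ 2 + 2 * nsq x := by nlinarith [norm_nonneg x]
    nlinarith [norm_nonneg x, nsq_nonneg x]
  · positivity

lemma integral_gfun {t : ℝ} (ht : 1 ≤ t) : ∫ x : ℝ × ℝ, gfun t x = π / t ^ 2 := by
  have ht0 : 0 < t := by linarith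
  have h0 : ∫ x : ℝ × ℝ, gfun t x
      = (2 * π) * ∫ r in Ioi (0:ℝ), r * (if t ^ 2 < r ^ 2 then ((r^2) ^ 2)⁻¹ else 0) :=
    radial_int (fun y => if t ^ 2 < y then (y ^ 2)⁻¹ else 0)
  rw [h0]
  have h1 : ∀ r ∈ Ioi (0:ℝ), r * (if t ^ 2 < r ^ 2 then ((r^2) ^ 2)⁻¹ else 0)
      = (Ioi t).indicator (fun r => (r ^ 3)⁻¹) r := by
    intro r hr
    simp only [mem_Ioi] at hr
    rw [indicator_apply]
    have : (t ^ 2 < r ^ 2) ↔ (r ∈ Ioi t) := by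
      simp only [mem_Ioi]
      constructor
      · intro h; nlinarith
      · intro h; nlinarith
    rw [if_congr this rfl rfl]
    split
    · rename_i h
      have hr0 : r ≠ 0 := by positivity
      field_simp
    · ring
  rw [setIntegral_congr_fun measurableSet_Ioi h1]
  rw [setIntegral_indicator measurableSet_Ioi]
  rw [show Ioi (0:ℝ) ∩ Ioi t = Ioi t by
    rw [Set.Ioi_inter_Ioi]; simp [max_eq_right (by linarith : (0:ℝ) ≤ t)]]
  have h2 : ∀ r ∈ Ioi t, (r ^ 3 : ℝ)⁻¹ = r ^ (-(3:ℕ):ℝ) := by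
    intro r hr
    simp only [mem_Ioi] at hr
    rw [rpow_neg_nat_eq r (by linarith) 3]
  rw [setIntegral_congr_fun measurableSet_Ioi h2]
  rw [integral_Ioi_rpow_of_lt (by norm_num) ht0]
  rw [show (-((3:ℕ):ℝ) + 1) = (-2 : ℝ) by norm_num]
  rw [show t ^ (-2:ℝ) = (t ^ 2)⁻¹ by
    rw [show (-2:ℝ) = (-((2:ℕ):ℝ)) by norm_num, rpow_neg_nat_eq t ht0.le]]
  field_simp

lemma integrable_Hfun :
    Integrable (fun x : ℝ × ℝ => 18 * ((max 1 (Real.sqrt (nsq x))) ^ 5)⁻¹) := by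
  refine Integrable.mono ((integrable_japanese (by norm_num : (2:ℝ) < 5)).const_mul (18*32))
    ?_ (Filter.Eventually.of_forall fun x => ?_)
  · exact (measurable_const.mul
      ((continuous_const.max continuous_nsq.sqrt).measurable.pow_const 5).inv).aestronglyMeasurable
  · set m := max 1 (Real.sqrt (nsq x)) with hm
    have hm1 : 1 ≤ m := le_max_left _ _
    have hmx : ‖x‖ ≤ m := (norm_le_sqrt_nsq x).trans (le_max_right _ _)
    rw [Real.norm_eq_abs, Real.norm_eq_abs, abs_of_nonneg (by positivity),
      abs_of_nonneg (by positivity : (0:ℝ) ≤ 18*32*(1 + ‖x‖) ^ (-(5:ℝ)))]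
    have hpos : (0:ℝ) < 1 + ‖x‖ := by positivity
    rw [show (-(5:ℝ)) = (-((5:ℕ):ℝ)) by norm_num, rpow_neg_nat_eq _ hpos.le]
    have key : (1 + ‖x‖) ^ 5 ≤ 32 * m ^ 5 := by
      have h2m : 1 + ‖x‖ ≤ 2 * m := by linarith
      calc (1 + ‖x‖) ^ 5 ≤ (2*m) ^ 5 := by
            apply pow_le_pow_left₀ (by positivity) h2m
        _ = 32 * m ^ 5 := by ring
    have hmpos : (0:ℝ) < m ^ 5 := by positivity
    rw [← one_div, ← one_div, mul_one_div, mul_one_div, div_le_div_iff₀ hmpos (by positivity)]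
    nlinarith [norm_nonneg x]

lemma integrableOn_hfun_Aset {t : ℝ} (ht : 1 ≤ t) : IntegrableOn hfun (Aset t) := by
  refine (integrable_Hfun.integrableOn).congr_fun (fun x hx => ?_) (Aset_ms t)
  have : max 1 (Real.sqrt (nsq x)) = Real.sqrt (nsq x) := max_eq_right (le_trans ht hx)
  beta_reduce; rw [this]; rfl

lemma integral_hfun_Aset {t : ℝ} (ht : 1 ≤ t) :
    ∫ x in Aset t, hfun x = 12 * π / t ^ 3 := by
  have ht0 : 0 < t := by linarith
  rw [← integral_indicator (Aset_ms t)]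
  have h0 : ∫ x : ℝ × ℝ, (if t ^ 2 ≤ nsq x then 18 * ((Real.sqrt (nsq x)) ^ 5)⁻¹ else 0)
      = (2 * π) * ∫ r in Ioi (0:ℝ),
          r * (if t ^ 2 ≤ r ^ 2 then 18 * ((Real.sqrt (r ^ 2)) ^ 5)⁻¹ else 0) :=
    radial_int (fun y => if t ^ 2 ≤ y then 18 * ((Real.sqrt y) ^ 5)⁻¹ else 0)
  have hpt : ∀ x : ℝ × ℝ, (Aset t).indicator hfun x
      = (if t ^ 2 ≤ nsq x then 18 * ((Real.sqrt (nsq x)) ^ 5)⁻¹ else 0) := by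
    intro x
    rw [indicator_apply]
    have hiff : (x ∈ Aset t) ↔ (t ^ 2 ≤ nsq x) := by
      rw [Aset, mem_setOf_eq]
      constructor
      · intro h
        nlinarith [Real.sq_sqrt (nsq_nonneg x)]
      · intro h
        rw [show t = Real.sqrt (t^2) from (Real.sqrt_sq ht0.le).symm]
        exact Real.sqrt_le_sqrt h
    rw [if_congr hiff rfl rfl]; rfl
  rw [integral_congr_ae (Filter.Eventually.of_forall hpt), h0]
  have h1 : ∀ r ∈ Ioi (0:ℝ),
      r * (if t ^ 2 ≤ r ^ 2 then 18 * ((Real.sqrt (r^2)) ^ 5)⁻¹ else 0)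
      = (Ici t).indicator (fun r => 18 * (r ^ 4)⁻¹) r := by
    intro r hr
    simp only [mem_Ioi] at hr
    rw [indicator_apply]
    have hs : Real.sqrt (r ^ 2) = r := Real.sqrt_sq hr.le
    have hiff : (t ^ 2 ≤ r ^ 2) ↔ (r ∈ Ici t) := by
      simp only [mem_Ici]
      constructor
      · intro h; nlinarith
      · intro h; nlinarith
    rw [if_congr hiff rfl rfl, hs]
    split
    · have hr0 : r ≠ 0 := hr.ne'
      field_simp
    · ring
  rw [setIntegral_congr_fun measurableSet_Ioi h1]
  rw [setIntegral_indicator measurableSet_Ici]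
  rw [show Ioi (0:ℝ) ∩ Ici t = Ici t by
    apply Set.inter_eq_self_of_subset_right
    intro r hr
    simp only [mem_Ici] at hr
    exact lt_of_lt_of_le ht0 hr]
  rw [integral_Ici_eq_integral_Ioi]
  have h2 : ∀ r ∈ Ioi t, (18 * ((r:ℝ) ^ 4)⁻¹) = 18 * r ^ (-(4:ℕ):ℝ) := by
    intro r hr
    simp only [mem_Ioi] at hr
    rw [rpow_neg_nat_eq r (by linarith) 4]
  rw [setIntegral_congr_fun measurableSet_Ioi h2]
  rw [MeasureTheory.integral_const_mul]
  rw [integral_Ioi_rpow_of_lt (by norm_num) ht0]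
  rw [show (-((4:ℕ):ℝ) + 1) = (-3 : ℝ) by norm_num]
  rw [show t ^ (-3:ℝ) = (t ^ 3)⁻¹ by
    rw [show (-3:ℝ) = (-((3:ℕ):ℝ)) by norm_num, rpow_neg_nat_eq t ht0.le]]
  field_simp
  ring

lemma Dset_volume_lt_top {t : ℝ} (ht : 0 ≤ t) : volume (Dset t) < ⊤ := by
  have hsub : Dset t ⊆ Icc (-(t+2)) (t+2) ×ˢ Icc (-(t+2)) (t+2) := by
    rintro x ⟨_, h2⟩
    have hx1 : x.1 ^ 2 ≤ (t + 2) ^ 2 := by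
      have h := Real.sq_sqrt (nsq_nonneg x)
      have h1 : nsq x ≤ (t+2)^2 := by nlinarith [Real.sqrt_nonneg (nsq x)]
      unfold nsq at h1
      nlinarith [sq_nonneg x.2]
    have hx2 : x.2 ^ 2 ≤ (t + 2) ^ 2 := by
      have h := Real.sq_sqrt (nsq_nonneg x)
      have h1 : nsq x ≤ (t+2)^2 := by nlinarith [Real.sqrt_nonneg (nsq x)]
      unfold nsq at h1
      nlinarith [sq_nonneg x.1]
    have ha1 : |x.1| ≤ t + 2 := by
      nlinarith [sq_abs x.1, abs_nonneg x.1]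
    have ha2 : |x.2| ≤ t + 2 := by
      nlinarith [sq_abs x.2, abs_nonneg x.2]
    exact ⟨abs_le.mp ha1, abs_le.mp ha2⟩
  calc volume (Dset t) ≤ volume (Icc (-(t+2)) (t+2) ×ˢ Icc (-(t+2)) (t+2)) := measure_mono hsub
    _ < ⊤ := by
        rw [Measure.volume_eq_prod, Measure.prod_prod, Real.volume_Icc]
        exact ENNReal.mul_lt_top ENNReal.ofReal_lt_top ENNReal.ofReal_lt_top

lemma Dset_volume {t : ℝ} (ht : 2 < t) : (volume (Dset t)).toReal = 8 * π * t := by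
  have h0 : ∫ x in Dset t, (1:ℝ) = (volume (Dset t)).toReal := by
    rw [setIntegral_const]; rw [smul_eq_mul, mul_one]; rfl
  rw [← h0, ← integral_indicator (Dset_ms t)]
  have hrad : ∫ x : ℝ × ℝ,
      (if t - 2 ≤ Real.sqrt (nsq x) ∧ Real.sqrt (nsq x) ≤ t + 2 then (1:ℝ) else 0)
      = (2 * π) * ∫ r in Ioi (0:ℝ),
        r * (if t - 2 ≤ Real.sqrt (r ^ 2) ∧ Real.sqrt (r ^ 2) ≤ t + 2 then (1:ℝ) else 0) :=
    radial_int (fun y => if t - 2 ≤ Real.sqrt y ∧ Real.sqrt y ≤ t + 2 then (1:ℝ) else 0)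
  have hpt : ∀ x : ℝ × ℝ, (Dset t).indicator (fun _ => (1:ℝ)) x
      = (if t - 2 ≤ Real.sqrt (nsq x) ∧ Real.sqrt (nsq x) ≤ t + 2 then (1:ℝ) else 0) := by
    intro x
    rw [indicator_apply]
    exact if_congr Iff.rfl rfl rfl
  rw [integral_congr_ae (Filter.Eventually.of_forall hpt), hrad]
  have h1 : ∀ r ∈ Ioi (0:ℝ),
      r * (if t - 2 ≤ Real.sqrt (r ^ 2) ∧ Real.sqrt (r ^ 2) ≤ t + 2 then (1:ℝ) else 0)
      = (Icc (t-2) (t+2)).indicator (fun r => r) r := by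
    intro r hr
    simp only [mem_Ioi] at hr
    rw [indicator_apply]
    rw [Real.sqrt_sq hr.le]
    have hiff : (t - 2 ≤ r ∧ r ≤ t + 2) ↔ (r ∈ Icc (t-2) (t+2)) := by
      simp [mem_Icc]
    rw [if_congr hiff rfl rfl]
    split <;> ring
  rw [setIntegral_congr_fun measurableSet_Ioi h1]
  rw [setIntegral_indicator measurableSet_Icc]
  rw [show Ioi (0:ℝ) ∩ Icc (t-2) (t+2) = Icc (t-2) (t+2) by
    apply Set.inter_eq_self_of_subset_right
    intro r hr
    simp only [mem_Icc] at hr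
    simp only [mem_Ioi]
    linarith [hr.1]]
  rw [integral_Icc_eq_integral_Ioc, ← intervalIntegral.integral_of_le (by linarith : t-2 ≤ t+2)]
  rw [integral_id]
  ring

def ffun (t : ℝ) (k : ℤ × ℤ) : ℝ := if t ^ 2 < ksq k then ((ksq k) ^ 2)⁻¹ else 0

lemma ksq_nonneg (k : ℤ × ℤ) : 0 ≤ ksq k := by unfold ksq; positivity

lemma ffun_nonneg (t : ℝ) (k : ℤ × ℤ) : 0 ≤ ffun t k := by unfold ffun; split <;> positivity

lemma ffun_le {t : ℝ} (ht : 1 ≤ t) (k : ℤ × ℤ) : ffun t k ≤ (t ^ 4)⁻¹ := by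
  unfold ffun
  split
  · rename_i h
    have h4 : (0:ℝ) < t ^ 4 := by positivity
    have : t ^ 4 ≤ (ksq k) ^ 2 := by nlinarith
    exact inv_anti₀ h4 this
  · positivity

lemma gfun_le {t : ℝ} (ht : 1 ≤ t) (x : ℝ × ℝ) : gfun t x ≤ (t ^ 4)⁻¹ := by
  unfold gfun
  split
  · rename_i h
    have h4 : (0:ℝ) < t ^ 4 := by positivity
    have : t ^ 4 ≤ (nsq x) ^ 2 := by nlinarith
    exact inv_anti₀ h4 this
  · positivity

lemma cellint_gfun_mem_Icc {t : ℝ} (ht : 1 ≤ t) (k : ℤ × ℤ) :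
    (0:ℝ) ≤ ∫ x in cell k, gfun t x ∧ (∫ x in cell k, gfun t x) ≤ (t ^ 4)⁻¹ := by
  constructor
  · exact setIntegral_nonneg (cell_ms k) fun x _ => gfun_nonneg t x
  · have hconst : IntegrableOn (fun _ : ℝ × ℝ => (t ^ 4)⁻¹) (cell k) := by
      apply (integrableOn_const_iff).mpr
      right
      rw [volume_cell]
      exact ENNReal.one_lt_top
    calc (∫ x in cell k, gfun t x) ≤ ∫ _ in cell k, (t ^ 4)⁻¹ :=
          setIntegral_mono_on ((integrable_gfun ht).integrableOn) hconst (cell_ms k)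
            fun x _ => gfun_le ht x
      _ = (t ^ 4)⁻¹ := by rw [setIntegral_const, measureReal_def, volume_cell_toReal, one_smul]

/-- universal (boundary) bound -/
lemma diff_bound_all {t : ℝ} (ht : 1 ≤ t) (k : ℤ × ℤ) :
    |ffun t k - ∫ x in cell k, gfun t x| ≤ 2 * (t ^ 4)⁻¹ := by
  obtain ⟨h1, h2⟩ := cellint_gfun_mem_Icc ht k
  have h3 := ffun_nonneg t k
  have h4 := ffun_le ht k
  rw [abs_sub_le_iff]
  constructor <;> linarith

/-- near case: everything vanishes -/
lemma diff_near {t : ℝ} (ht : 4 ≤ t) {k : ℤ × ℤ} (hk : Real.sqrt (ksq k) < t - 1) :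
    ffun t k - (∫ x in cell k, gfun t x) = 0 := by
  have hs := Real.sq_sqrt (ksq_nonneg k)
  have hf : ffun t k = 0 := by
    unfold ffun
    rw [if_neg]
    push_neg
    nlinarith [Real.sqrt_nonneg (ksq k)]
  have hg : ∫ x in cell k, gfun t x = 0 := by
    rw [setIntegral_congr_fun (cell_ms k) (g := fun _ => (0:ℝ))
      (fun x hx => ?_), integral_zero]
    have hb := cell_sqrt_bound hx
    have hσ := Real.sq_sqrt (nsq_nonneg x)
    unfold gfun
    rw [if_neg]
    push_neg
    rw [abs_le] at hb
    nlinarith [Real.sqrt_nonneg (nsq x), Real.sqrt_nonneg (ksq k)]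
  rw [hf, hg, sub_zero]

lemma far_cell_subset_Aset {t : ℝ} (ht : 4 ≤ t) {k : ℤ × ℤ}
    (hk : t + 1 < Real.sqrt (ksq k)) : cell k ⊆ Aset t := by
  intro x hx
  have hb := cell_sqrt_bound hx
  rw [abs_le] at hb
  show t ≤ Real.sqrt (nsq x)
  linarith [hb.2]

/-- far case pointwise bound -/
lemma far_pointwise {t : ℝ} (ht : 4 ≤ t) {k : ℤ × ℤ}
    (hk : t + 1 < Real.sqrt (ksq k)) {x : ℝ × ℝ} (hx : x ∈ cell k) :
    |ffun t k - gfun t x| ≤ hfun x := by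
  set m := Real.sqrt (ksq k) with hmdef
  set ρ := Real.sqrt (nsq x) with hρdef
  have hb := cell_sqrt_bound hx
  rw [abs_le] at hb
  have hm5 : 5 ≤ m := by linarith
  have hρ4 : 4 ≤ ρ := by linarith [hb.2]
  have hρm1 : ρ ≤ m + 1 := by linarith [hb.1]
  have hρm2 : m - 1 ≤ ρ := by linarith [hb.2]
  have hs : ksq k = m ^ 2 := (Real.sq_sqrt (ksq_nonneg k)).symm
  have hσ : nsq x = ρ ^ 2 := (Real.sq_sqrt (nsq_nonneg x)).symm
  have hf : ffun t k = (m ^ 4)⁻¹ := by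
    unfold ffun
    rw [if_pos (by nlinarith), hs]
    ring_nf
  have hg : gfun t x = (ρ ^ 4)⁻¹ := by
    unfold gfun
    rw [if_pos (by nlinarith), hσ]
    ring_nf
  have hh : hfun x = 18 * (ρ ^ 5)⁻¹ := by unfold hfun; rw [← hρdef]
  rw [hf, hg, hh]
  have hm0 : (0:ℝ) < m := by linarith
  have hρ0 : (0:ℝ) < ρ := by linarith
  have e : (m ^ 4)⁻¹ - (ρ ^ 4)⁻¹ = (ρ ^ 4 - m ^ 4) * ((m ^ 4)⁻¹ * (ρ ^ 4)⁻¹) := by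
    field_simp
  rw [e, abs_mul, abs_of_pos (by positivity : (0:ℝ) < (m ^ 4)⁻¹ * (ρ ^ 4)⁻¹)]
  have hb4 : |ρ ^ 4 - m ^ 4| ≤ 9 * m ^ 3 := by
    rw [abs_le]
    have hub : ρ ^ 4 ≤ (m + 1) ^ 4 := pow_le_pow_left₀ hρ0.le hρm1 4
    have hlb : (m - 1) ^ 4 ≤ ρ ^ 4 := pow_le_pow_left₀ (by linarith) hρm2 4
    constructor
    · nlinarith [sq_nonneg m, sq_nonneg (m - 1)]
    · nlinarith [sq_nonneg m, sq_nonneg (m - 5), mul_nonneg (mul_nonneg hm0.le hm0.le) hm0.le]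
  calc |ρ ^ 4 - m ^ 4| * ((m ^ 4)⁻¹ * (ρ ^ 4)⁻¹)
      ≤ (9 * m ^ 3) * ((m ^ 4)⁻¹ * (ρ ^ 4)⁻¹) := by
        apply mul_le_mul_of_nonneg_right hb4 (by positivity)
    _ ≤ 18 * (ρ ^ 5)⁻¹ := by
        rw [← one_div, ← one_div, ← one_div, div_mul_div_comm, mul_one, mul_one_div,
          mul_one_div, div_le_div_iff₀ (by positivity) (by positivity)]
        nlinarith [mul_nonneg (mul_nonneg
          (by positivity : (0:ℝ) ≤ 9 * m ^ 3) (by positivity : (0:ℝ) ≤ ρ ^ 4))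
          (by linarith : (0:ℝ) ≤ 2 * m - ρ)]

/-- far case integral bound -/
lemma diff_far {t : ℝ} (ht : 4 ≤ t) {k : ℤ × ℤ}
    (hk : t + 1 < Real.sqrt (ksq k)) :
    |ffun t k - ∫ x in cell k, gfun t x| ≤ ∫ x in cell k, hfun x := by
  have hgint : IntegrableOn (gfun t) (cell k) := (integrable_gfun (by linarith)).integrableOn
  have hconst : IntegrableOn (fun _ : ℝ × ℝ => ffun t k) (cell k) := by
    apply (integrableOn_const_iff).mpr
    right; rw [volume_cell]; exact ENNReal.one_lt_top
  have hhint : IntegrableOn hfun (cell k) :=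
    (integrableOn_hfun_Aset (by linarith : (1:ℝ) ≤ t)).mono_set (far_cell_subset_Aset ht hk)
  have h1 : ffun t k - (∫ x in cell k, gfun t x) = ∫ x in cell k, (ffun t k - gfun t x) := by
    rw [integral_sub hconst hgint, setIntegral_const, measureReal_def, volume_cell_toReal, one_smul]
  rw [h1]
  calc |∫ x in cell k, (ffun t k - gfun t x)| ≤ ∫ x in cell k, |ffun t k - gfun t x| := by
        rw [← Real.norm_eq_abs]
        refine (norm_integral_le_integral_norm _).trans ?_
        apply le_of_eq
        congr 1
    _ ≤ ∫ x in cell k, hfun x :=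
        setIntegral_mono_on (hconst.sub hgint).abs hhint (cell_ms k)
          fun x hx => far_pointwise ht hk hx

def Fset (t : ℝ) : Set (ℤ × ℤ) := {k | t + 1 < Real.sqrt (ksq k)}

def Bset (t : ℝ) : Set (ℤ × ℤ) :=
  {k | t - 1 ≤ Real.sqrt (ksq k) ∧ Real.sqrt (ksq k) ≤ t + 1}

lemma Bset_finite (t : ℝ) : (Bset t).Finite := by
  set N : ℤ := ⌈t⌉ + 1 with hN
  apply Set.Finite.subset (Finset.Icc ((-N, -N) : ℤ × ℤ) (N, N)).finite_toSet
  intro k hk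
  obtain ⟨_, h2⟩ := hk
  have hs := Real.sq_sqrt (ksq_nonneg k)
  have hsb : ksq k ≤ (t + 1) ^ 2 := by nlinarith [Real.sqrt_nonneg (ksq k)]
  have htN : t + 1 ≤ (N : ℝ) := by
    rw [hN]
    push_cast
    linarith [Int.le_ceil t]
  have ht1 : (0:ℝ) ≤ t + 1 := le_trans (Real.sqrt_nonneg _) h2
  have hb1 : ((k.1 : ℝ)) ^ 2 ≤ (N:ℝ) ^ 2 := by
    unfold ksq at hsb
    nlinarith [sq_nonneg ((k.2:ℝ))]
  have hb2 : ((k.2 : ℝ)) ^ 2 ≤ (N:ℝ) ^ 2 := by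
    unfold ksq at hsb
    nlinarith [sq_nonneg ((k.1:ℝ))]
  have hN0 : (0:ℝ) ≤ (N:ℝ) := by linarith
  have ha1 : |(k.1 : ℝ)| ≤ (N:ℝ) := by nlinarith [sq_abs ((k.1:ℝ)), abs_nonneg ((k.1:ℝ))]
  have ha2 : |(k.2 : ℝ)| ≤ (N:ℝ) := by nlinarith [sq_abs ((k.2:ℝ)), abs_nonneg ((k.2:ℝ))]
  rw [abs_le] at ha1 ha2
  simp only [Finset.coe_Icc, mem_Icc, Prod.le_def]
  constructor
  · constructor <;> [exact_mod_cast ha1.1; exact_mod_cast ha2.1]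
  · constructor <;> [exact_mod_cast ha1.2; exact_mod_cast ha2.2]

lemma Bset_card_le {t : ℝ} (ht : 4 ≤ t) :
    ((Bset_finite t).toFinset.card : ℝ) ≤ 8 * π * t := by
  set BF := (Bset_finite t).toFinset with hBF
  have hsub : (⋃ k ∈ BF, cell k) ⊆ Dset t := by
    intro x hx
    simp only [mem_iUnion] at hx
    obtain ⟨k, hkB, hkc⟩ := hx
    have hkB' : k ∈ Bset t := by rwa [hBF, Set.Finite.mem_toFinset] at hkB
    obtain ⟨hk1, hk2⟩ := hkB'
    have hb := cell_sqrt_bound hkc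
    rw [abs_le] at hb
    exact ⟨by linarith [hb.1], by linarith [hb.2]⟩
  have hdisj : (↑BF : Set (ℤ × ℤ)).PairwiseDisjoint cell :=
    fun i _ j _ hij => cell_disjoint hij
  have hvol : volume (⋃ k ∈ BF, cell k) = (BF.card : ℝ≥0∞) := by
    rw [measure_biUnion_finset hdisj fun k _ => cell_ms k]
    simp [volume_cell]
  have hle : (BF.card : ℝ≥0∞) ≤ volume (Dset t) := by
    rw [← hvol]
    exact measure_mono hsub
  have h1 : ((BF.card : ℝ≥0∞)).toReal ≤ (volume (Dset t)).toReal :=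
    ENNReal.toReal_mono (Dset_volume_lt_top (by linarith)).ne hle
  rw [Dset_volume (by linarith)] at h1
  simpa using h1

lemma hasSum_cellint_gfun {t : ℝ} (ht : 1 ≤ t) :
    HasSum (fun k : ℤ × ℤ => ∫ x in cell k, gfun t x) (π / t ^ 2) := by
  have h := hasSum_integral_iUnion (μ := volume) (f := gfun t) cell_ms cell_disjoint
    (by rw [iUnion_cell]; exact (integrable_gfun ht).integrableOn)
  rw [iUnion_cell, Measure.restrict_univ] at h
  rwa [integral_gfun ht] at h

set_option maxHeartbeats 1000000 in
lemma hasSum_far {t : ℝ} (ht : 4 ≤ t) :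
    HasSum (fun i : (Fset t) => ∫ x in cell i.1, hfun x)
      (∫ x in (⋃ i : (Fset t), cell i.1), hfun x) := by
  have hd : Pairwise (Function.onFun Disjoint fun i : (Fset t) => cell i.1) := by
    intro i j hij
    exact cell_disjoint fun h => hij (Subtype.ext h)
  have hint : MeasureTheory.IntegrableOn hfun (⋃ i : (Fset t), cell i.1) := by
    apply ((integrableOn_hfun_Aset (by linarith : (1:ℝ) ≤ t))).mono_set
    apply Set.iUnion_subset
    intro i
    exact far_cell_subset_Aset ht i.2
  exact hasSum_integral_iUnion (fun i => cell_ms i.1) hd hint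

set_option maxHeartbeats 1000000 in
lemma tsum_far_le {t : ℝ} (ht : 4 ≤ t) :
    ∑' i : (Fset t), ∫ x in cell i.1, hfun x ≤ 12 * π / t ^ 3 := by
  rw [(hasSum_far ht).tsum_eq]
  rw [← integral_hfun_Aset (by linarith : (1:ℝ) ≤ t)]
  apply setIntegral_mono_set (integrableOn_hfun_Aset (by linarith))
    (Filter.Eventually.of_forall fun x => hfun_nonneg x)
  apply HasSubset.Subset.eventuallyLE
  apply Set.iUnion_subset
  intro i
  exact far_cell_subset_Aset ht i.2

lemma main_est {t : ℝ} (ht : 4 ≤ t) :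
    |(∑' k : ℤ × ℤ, ffun t k) - π / t ^ 2| ≤ 100 / t ^ 3 := by
  have ht1 : (1:ℝ) ≤ t := by linarith
  have ht0 : (0:ℝ) < t := by linarith
  set I : ℤ × ℤ → ℝ := fun k => ∫ x in cell k, gfun t x with hI
  set d : ℤ × ℤ → ℝ := fun k => ffun t k - I k with hd
  set b1 : ℤ × ℤ → ℝ := (Bset t).indicator (fun _ => 2 * (t ^ 4)⁻¹) with hb1
  set b2 : ℤ × ℤ → ℝ := (Fset t).indicator (fun k => ∫ x in cell k, hfun x) with hb2
  have hb1nn : ∀ k, 0 ≤ b1 k := fun k =>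
    Set.indicator_nonneg (fun _ _ => by positivity) k
  have hb2nn : ∀ k, 0 ≤ b2 k := fun k =>
    Set.indicator_nonneg (fun j _ => setIntegral_nonneg (cell_ms j) fun x _ => hfun_nonneg x) k
  have hdb : ∀ k, |d k| ≤ b1 k + b2 k := by
    intro k
    by_cases h1 : Real.sqrt (ksq k) < t - 1
    · rw [hd]
      simp only
      rw [diff_near ht h1, abs_zero]
      exact add_nonneg (hb1nn k) (hb2nn k)
    by_cases h2 : t + 1 < Real.sqrt (ksq k)
    · have hk : k ∈ Fset t := h2
      have : b2 k = ∫ x in cell k, hfun x := Set.indicator_of_mem hk _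
      rw [this]
      have := diff_far ht h2
      linarith [hb1nn k, this]
    · have hk : k ∈ Bset t := ⟨by linarith [not_lt.mp h1], not_lt.mp h2⟩
      have : b1 k = 2 * (t ^ 4)⁻¹ := Set.indicator_of_mem hk _
      rw [this]
      have := diff_bound_all ht1 k
      linarith [hb2nn k, this]
  have hb1sum : Summable b1 := by
    apply summable_of_ne_finset_zero (s := (Bset_finite t).toFinset)
    intro k hk
    apply Set.indicator_of_notMem
    rwa [← Set.Finite.mem_toFinset (Bset_finite t)]
  have hb2sum : Summable b2 := by
    rw [hb2, ← summable_subtype_iff_indicator]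
    exact (hasSum_far ht).summable
  have hdabs : Summable (fun k => |d k|) :=
    Summable.of_nonneg_of_le (fun k => abs_nonneg _) hdb (hb1sum.add hb2sum)
  have hdsum : Summable d := summable_abs_iff.mp hdabs
  have hIsum : HasSum I (π / t ^ 2) := hasSum_cellint_gfun ht1
  have hfsum : Summable (ffun t) := by
    have h := hdsum.add hIsum.summable
    apply h.congr
    intro k
    simp [hd]
  have key : (∑' k : ℤ × ℤ, ffun t k) - π / t ^ 2 = ∑' k, d k := by
    rw [← hIsum.tsum_eq, ← Summable.tsum_sub hfsum hIsum.summable]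
  rw [key]
  have habs : |∑' k, d k| ≤ ∑' k, |d k| := by
    rw [← Real.norm_eq_abs]
    refine (norm_tsum_le_tsum_norm ?_).trans (le_of_eq ?_)
    · simpa [Real.norm_eq_abs] using hdabs
    · simp [Real.norm_eq_abs]
  have hb1tsum : ∑' k, b1 k ≤ 16 * π / t ^ 3 := by
    rw [tsum_eq_sum (s := (Bset_finite t).toFinset) (fun k hk =>
      Set.indicator_of_notMem (by rwa [← Set.Finite.mem_toFinset (Bset_finite t)]) _)]
    have hle : ∑ k ∈ (Bset_finite t).toFinset, b1 k
        ≤ (Bset_finite t).toFinset.card • (2 * (t ^ 4)⁻¹) := by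
      apply Finset.sum_le_card_nsmul
      intro k _
      exact Set.indicator_apply_le' (fun _ => le_rfl) (fun _ => by positivity)
    rw [nsmul_eq_mul] at hle
    refine hle.trans ?_
    have hcard := Bset_card_le ht
    have h2t : (0:ℝ) ≤ 2 * (t ^ 4)⁻¹ := by positivity
    calc ((Bset_finite t).toFinset.card : ℝ) * (2 * (t ^ 4)⁻¹)
        ≤ (8 * π * t) * (2 * (t ^ 4)⁻¹) := mul_le_mul_of_nonneg_right hcard h2t
      _ = 16 * π / t ^ 3 := by field_simp; ring
  have hb2tsum : ∑' k, b2 k ≤ 12 * π / t ^ 3 := by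
    rw [hb2, ← tsum_subtype]
    exact tsum_far_le ht
  calc |∑' k, d k| ≤ ∑' k, |d k| := habs
    _ ≤ ∑' k, (b1 k + b2 k) := Summable.tsum_le_tsum hdb hdabs (hb1sum.add hb2sum)
    _ = (∑' k, b1 k) + ∑' k, b2 k := Summable.tsum_add hb1sum hb2sum
    _ ≤ 16 * π / t ^ 3 + 12 * π / t ^ 3 := add_le_add hb1tsum hb2tsum
    _ ≤ 100 / t ^ 3 := by
        rw [← add_div, div_le_div_iff₀ (by positivity) (by positivity)]
        nlinarith [pi_lt_d2, pow_pos ht0 3]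

/-- Tail estimate for the lattice sum of `|k|^{-4}`:
`Σ'_{|k|>t} |k|^{-4} = π/t² + O(t^{-3})`, i.e. there are `C, t₀` with
`|Σ'_{|k|>t} |k|^{-4} − π t^{-2}| ≤ C t^{-3}` for all `t ≥ t₀`. -/
theorem lattice_tail_fourth_power :
    ∃ C t₀ : ℝ, ∀ t : ℝ, t₀ ≤ t →
      |(∑' k : ℤ × ℤ, if t ^ 2 < ksq k then ((ksq k) ^ 2)⁻¹ else 0) - π / t ^ 2|
        ≤ C / t ^ 3 := by
  refine ⟨100, 4, fun t ht => ?_⟩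
  have h : (∑' k : ℤ × ℤ, if t ^ 2 < ksq k then ((ksq k) ^ 2)⁻¹ else 0)
      = ∑' k : ℤ × ℤ, ffun t k := rfl
  rw [h]
  exact main_est ht

end
end

section
/- Fix an integer l ≥ 1 and a real z with l < z < l+1, z² ∉ ℤ·(l+1) boundary; then lim_{n→∞} ( Σ_{k∈ℤ∖{0}} k^{2n}/(1+(k/z)^{2n})² )^{1/(2n)} = max(l, z²/(l+1)). -/
open Real Filter
open scoped Topology

/-- Algebraic helper: `a^(2n) / ((a/z)^(2n))^2 = (z^2/a)^(2n)`. -/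
lemma pow_ratio_helper (a z : ℝ) (ha : a ≠ 0) (hz : z ≠ 0) (n : ℕ) :
    a ^ (2 * n) / ((a / z) ^ (2 * n)) ^ 2 = (z ^ 2 / a) ^ (2 * n) := by
  have hX : a ^ (2 * n) ≠ 0 := pow_ne_zero _ ha
  have hY : z ^ (2 * n) ≠ 0 := pow_ne_zero _ hz
  rw [div_pow a z, div_pow (z ^ 2) a]
  have hzz : (z ^ 2) ^ (2 * n) = (z ^ (2 * n)) ^ 2 := by
    rw [← pow_mul, ← pow_mul, mul_comm]
  rw [hzz]
  field_simp

/-- The lattice sum term. -/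
noncomputable def latTerm (z : ℝ) (n : ℕ) (k : ℤ) : ℝ :=
  if k = 0 then 0 else (k : ℝ) ^ (2 * n) / (1 + ((k : ℝ) / z) ^ (2 * n)) ^ 2

/-- The comparison function. -/
noncomputable def latCmp (L : ℝ) (k : ℤ) : ℝ :=
  if k = 0 then 0 else if |(k : ℝ)| ≤ L then 1 else ((L + 1) / (k : ℝ)) ^ 2

lemma latTerm_nonneg (z : ℝ) (n : ℕ) (k : ℤ) : 0 ≤ latTerm z n k := by
  unfold latTerm
  split
  · exact le_refl 0
  · refine div_nonneg ?_ (sq_nonneg _)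
    rw [pow_mul]
    positivity

lemma latCmp_nonneg (L : ℝ) (k : ℤ) : 0 ≤ latCmp L k := by
  unfold latCmp
  split
  · exact le_refl 0
  · split
    · exact zero_le_one
    · exact sq_nonneg _

lemma latCmp_summable {L : ℝ} (hL1 : (1 : ℝ) ≤ L) : Summable (latCmp L) := by
  have hmaj : Summable (fun k : ℤ => (L + 1) ^ 2 * (1 / (k : ℝ) ^ 2)) :=
    Summable.mul_left _ (summable_one_div_int_pow.mpr (by norm_num))
  have hle : ∀ k : ℤ, latCmp L k ≤ (L + 1) ^ 2 * (1 / (k : ℝ) ^ 2) := by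
    intro k
    by_cases hk : k = 0
    · simp [latCmp, hk]
    · have hk0 : ((k : ℝ)) ≠ 0 := Int.cast_ne_zero.mpr hk
      have hk2 : (0 : ℝ) < (k : ℝ) ^ 2 := by positivity
      simp only [latCmp, if_neg hk]
      split
      · rename_i hab
        rw [mul_one_div, le_div_iff₀ hk2, one_mul]
        nlinarith [sq_abs ((k : ℝ)), abs_nonneg ((k : ℝ))]
      · rw [div_pow, mul_one_div]
  exact Summable.of_nonneg_of_le (latCmp_nonneg L) hle hmaj

lemma latCmp_one {L : ℝ} (hL1 : (1 : ℝ) ≤ L) : latCmp L 1 = 1 := by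
  unfold latCmp
  rw [if_neg (by norm_num), if_pos]
  push_cast
  rw [abs_one]
  exact hL1

/-- Key pointwise upper bound. -/
lemma latTerm_key (l : ℕ) (z M : ℝ) (hl : 1 ≤ l) (h1 : (l : ℝ) < z)
    (h2 : z < (l : ℝ) + 1) (hLM : (l : ℝ) ≤ M)
    (hbM : z ^ 2 / ((l : ℝ) + 1) ≤ M) (n : ℕ) (hn : 1 ≤ n) (k : ℤ) :
    latTerm z n k ≤ M ^ (2 * n) * latCmp (l : ℝ) k := by
  have hL1 : (1 : ℝ) ≤ (l : ℝ) := by exact_mod_cast hl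
  have hz0 : (0 : ℝ) < z := by linarith
  have hM0 : (0 : ℝ) < M := by linarith
  by_cases hk : k = 0
  · simp [latTerm, latCmp, hk]
  · have hk0 : ((k : ℝ)) ≠ 0 := Int.cast_ne_zero.mpr hk
    have ha0 : (0 : ℝ) < |(k : ℝ)| := abs_pos.mpr hk0
    have habs : (k : ℝ) ^ (2 * n) = |(k : ℝ)| ^ (2 * n) := by
      rw [pow_mul, pow_mul, sq_abs]
    have habs2 : ((k : ℝ) / z) ^ (2 * n) = (|(k : ℝ)| / z) ^ (2 * n) := by
      rw [pow_mul, pow_mul]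
      congr 1
      rw [div_pow, div_pow, sq_abs]
    simp only [latTerm, latCmp, if_neg hk]
    rw [habs, habs2]
    set a : ℝ := |(k : ℝ)| with hadef
    by_cases hal : |(k : ℝ)| ≤ (l : ℝ)
    · rw [if_pos hal, mul_one]
      have hx : (0 : ℝ) ≤ (a / z) ^ (2 * n) := by positivity
      have hden : (1 : ℝ) ≤ (1 + (a / z) ^ (2 * n)) ^ 2 := by nlinarith
      calc a ^ (2 * n) / (1 + (a / z) ^ (2 * n)) ^ 2
          ≤ a ^ (2 * n) := div_le_self (by positivity) hden
        _ ≤ (l : ℝ) ^ (2 * n) := pow_le_pow_left₀ ha0.le hal _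
        _ ≤ M ^ (2 * n) := pow_le_pow_left₀ (by linarith) hLM _
    · rw [if_neg hal]
      have hla : (l : ℝ) + 1 ≤ a := by
        have h' : (l : ℝ) < |(k : ℝ)| := lt_of_not_ge hal
        have h'' : (l : ℤ) < |k| := by exact_mod_cast h'
        have h3 : (l : ℤ) + 1 ≤ |k| := h''
        have h4 : (l : ℝ) + 1 ≤ |(k : ℝ)| := by exact_mod_cast h3
        exact h4
      have hsq : (((l : ℝ) + 1) / (k : ℝ)) ^ 2 = (((l : ℝ) + 1) / a) ^ 2 := by
        rw [div_pow, div_pow, hadef, sq_abs]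
      rw [hsq]
      have hx0 : (0 : ℝ) < (a / z) ^ (2 * n) := by positivity
      have step1 : a ^ (2 * n) / (1 + (a / z) ^ (2 * n)) ^ 2
          ≤ a ^ (2 * n) / ((a / z) ^ (2 * n)) ^ 2 :=
        div_le_div_of_nonneg_left (by positivity) (by positivity) (by nlinarith)
      have step2 : a ^ (2 * n) / ((a / z) ^ (2 * n)) ^ 2 = (z ^ 2 / a) ^ (2 * n) :=
        pow_ratio_helper a z ha0.ne' hz0.ne' n
      have step3 : (z ^ 2 / a) ^ (2 * n) ≤ M ^ (2 * n) * (((l : ℝ) + 1) / a) ^ 2 := by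
        have hA0 : (0 : ℝ) < (l : ℝ) + 1 := by linarith
        have heq : z ^ 2 / a = (z ^ 2 / ((l : ℝ) + 1)) * (((l : ℝ) + 1) / a) := by
          field_simp
        rw [heq, mul_pow]
        have hfrac0 : (0 : ℝ) ≤ ((l : ℝ) + 1) / a := by positivity
        have hfrac1 : ((l : ℝ) + 1) / a ≤ 1 := by
          rw [div_le_one ha0]; exact hla
        have h2n : 2 ≤ 2 * n := by omega
        have hb0 : (0 : ℝ) < z ^ 2 / ((l : ℝ) + 1) := by positivity
        exact mul_le_mul (pow_le_pow_left₀ hb0.le hbM _)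
          (pow_le_pow_of_le_one hfrac0 hfrac1 h2n) (by positivity) (by positivity)
      calc a ^ (2 * n) / (1 + (a / z) ^ (2 * n)) ^ 2
          ≤ a ^ (2 * n) / ((a / z) ^ (2 * n)) ^ 2 := step1
        _ = (z ^ 2 / a) ^ (2 * n) := step2
        _ ≤ M ^ (2 * n) * (((l : ℝ) + 1) / a) ^ 2 := step3

/-- Lower bound from the term at `k = l`. -/
lemma latTerm_lower_l (l : ℕ) (z : ℝ) (hl : 1 ≤ l) (h1 : (l : ℝ) < z)
    (n : ℕ) :
    (1 / 4 : ℝ) * (l : ℝ) ^ (2 * n) ≤ latTerm z n (l : ℤ) := by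
  have hL1 : (1 : ℝ) ≤ (l : ℝ) := by exact_mod_cast hl
  have hz0 : (0 : ℝ) < z := by linarith
  have hk : ((l : ℤ)) ≠ 0 := by positivity
  have hterm : latTerm z n (l : ℤ)
      = (l : ℝ) ^ (2 * n) / (1 + ((l : ℝ) / z) ^ (2 * n)) ^ 2 := by
    simp only [latTerm, if_neg hk, Int.cast_natCast]
  rw [hterm]
  have hx0 : (0 : ℝ) ≤ ((l : ℝ) / z) ^ (2 * n) := by positivity
  have hx1 : ((l : ℝ) / z) ^ (2 * n) ≤ 1 :=
    pow_le_one₀ (by positivity) ((div_le_one hz0).mpr h1.le)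
  have hden : (1 + ((l : ℝ) / z) ^ (2 * n)) ^ 2 ≤ 4 := by nlinarith
  have hnum : (0 : ℝ) ≤ (l : ℝ) ^ (2 * n) := by positivity
  have hden0 : (0 : ℝ) < (1 + ((l : ℝ) / z) ^ (2 * n)) ^ 2 := by positivity
  rw [div_eq_mul_one_div ((l : ℝ) ^ (2 * n)), mul_comm ((l : ℝ) ^ (2 * n))]
  apply mul_le_mul_of_nonneg_right _ hnum
  rw [div_le_div_iff₀ (by norm_num) hden0, one_mul, one_mul]
  linarith

/-- Lower bound from the term at `k = l + 1`. -/
lemma latTerm_lower_l1 (l : ℕ) (z : ℝ) (hl : 1 ≤ l) (h1 : (l : ℝ) < z)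
    (h2 : z < (l : ℝ) + 1) (n : ℕ) :
    (1 / 4 : ℝ) * (z ^ 2 / ((l : ℝ) + 1)) ^ (2 * n) ≤ latTerm z n ((l : ℤ) + 1) := by
  have hL1 : (1 : ℝ) ≤ (l : ℝ) := by exact_mod_cast hl
  have hz0 : (0 : ℝ) < z := by linarith
  have hA0 : (0 : ℝ) < (l : ℝ) + 1 := by linarith
  have hk : ((l : ℤ) + 1) ≠ 0 := by positivity
  have hcast : (((l : ℤ) + 1 : ℤ) : ℝ) = (l : ℝ) + 1 := by push_cast; ring
  have hterm : latTerm z n ((l : ℤ) + 1) =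
      ((l : ℝ) + 1) ^ (2 * n) / (1 + (((l : ℝ) + 1) / z) ^ (2 * n)) ^ 2 := by
    simp only [latTerm, if_neg hk, hcast]
  rw [hterm]
  have hA1 : (1 : ℝ) ≤ ((l : ℝ) + 1) / z := (le_div_iff₀ hz0).mpr (by linarith)
  have hx1 : (1 : ℝ) ≤ (((l : ℝ) + 1) / z) ^ (2 * n) := one_le_pow₀ hA1
  have hxpos : (0 : ℝ) < (((l : ℝ) + 1) / z) ^ (2 * n) := pow_pos (div_pos hA0 hz0) _
  have hnum : (0 : ℝ) ≤ ((l : ℝ) + 1) ^ (2 * n) := pow_nonneg hA0.le _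
  have hd1 : (0 : ℝ) < (1 + (((l : ℝ) + 1) / z) ^ (2 * n)) ^ 2 :=
    pow_pos (by linarith) 2
  have hd2 : (1 + (((l : ℝ) + 1) / z) ^ (2 * n)) ^ 2
      ≤ 4 * ((((l : ℝ) + 1) / z) ^ (2 * n)) ^ 2 := by
    nlinarith [hx1, sq_nonneg ((((l : ℝ) + 1) / z) ^ (2 * n) - 1)]
  have step1 : ((l : ℝ) + 1) ^ (2 * n) / (4 * ((((l : ℝ) + 1) / z) ^ (2 * n)) ^ 2)
      ≤ ((l : ℝ) + 1) ^ (2 * n) / (1 + (((l : ℝ) + 1) / z) ^ (2 * n)) ^ 2 :=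
    div_le_div_of_nonneg_left hnum hd1 hd2
  have step2 : ((l : ℝ) + 1) ^ (2 * n) / (4 * ((((l : ℝ) + 1) / z) ^ (2 * n)) ^ 2)
      = (1 / 4 : ℝ) * (z ^ 2 / ((l : ℝ) + 1)) ^ (2 * n) := by
    rw [← pow_ratio_helper ((l : ℝ) + 1) z hA0.ne' hz0.ne' n]
    rw [div_mul_eq_div_div_swap, mul_comm (1 / 4 : ℝ), ← div_eq_mul_one_div]
  rw [← step2]
  exact step1

/-- For an integer `l ≥ 1` and real `z ∈ (l, l+1)`, the large-`n` limit of the `(2n)`-th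
root of the lattice sum `Σ_{k≠0} k^{2n}/(1+(k/z)^{2n})²` equals `max(l, z²/(l+1))`. -/
theorem large_n_root_limit (l : ℕ) (hl : 1 ≤ l) (z : ℝ)
    (h1 : (l : ℝ) < z) (h2 : z < (l : ℝ) + 1) :
    Tendsto
      (fun n : ℕ =>
        (∑' k : ℤ, if k = 0 then 0 else
            (k : ℝ) ^ (2 * n) / (1 + ((k : ℝ) / z) ^ (2 * n)) ^ 2)
          ^ (1 / (2 * (n : ℝ))))
      atTop (𝓝 (max (l : ℝ) (z ^ 2 / ((l : ℝ) + 1)))) := by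
  have hL1 : (1 : ℝ) ≤ (l : ℝ) := by exact_mod_cast hl
  have hz0 : (0 : ℝ) < z := by linarith
  have hb0 : (0 : ℝ) < z ^ 2 / ((l : ℝ) + 1) := by positivity
  set M : ℝ := max (l : ℝ) (z ^ 2 / ((l : ℝ) + 1)) with hMdef
  have hLM : (l : ℝ) ≤ M := le_max_left _ _
  have hbM : z ^ 2 / ((l : ℝ) + 1) ≤ M := le_max_right _ _
  have hM0 : (0 : ℝ) < M := lt_of_lt_of_le (by linarith) hLM
  have hshow : (fun n : ℕ =>
      (∑' k : ℤ, if k = 0 then (0:ℝ) else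
          (k : ℝ) ^ (2 * n) / (1 + ((k : ℝ) / z) ^ (2 * n)) ^ 2)
        ^ (1 / (2 * (n : ℝ)))) = fun n : ℕ =>
      (∑' k : ℤ, latTerm z n k) ^ (1 / (2 * (n : ℝ))) := rfl
  rw [hshow]
  have hsumh : Summable (latCmp (l : ℝ)) := latCmp_summable hL1
  set C : ℝ := ∑' k : ℤ, latCmp (l : ℝ) k with hCdef
  have hC1 : (1 : ℝ) ≤ C := by
    calc (1 : ℝ) = latCmp (l : ℝ) 1 := (latCmp_one hL1).symm
      _ ≤ C := Summable.le_tsum hsumh 1 fun j _ => latCmp_nonneg _ j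
  have hC0 : (0 : ℝ) < C := lt_of_lt_of_le one_pos hC1
  have hkey : ∀ n : ℕ, 1 ≤ n → ∀ k : ℤ,
      latTerm z n k ≤ M ^ (2 * n) * latCmp (l : ℝ) k :=
    fun n hn k => latTerm_key l z M hl h1 h2 hLM hbM n hn k
  have hsumg : ∀ n : ℕ, 1 ≤ n → Summable (latTerm z n) := fun n hn =>
    Summable.of_nonneg_of_le (latTerm_nonneg z n) (hkey n hn) (hsumh.mul_left _)
  set S : ℕ → ℝ := fun n => ∑' k : ℤ, latTerm z n k with hSdef
  -- upper bound on S
  have hupper : ∀ n : ℕ, 1 ≤ n → S n ≤ C * M ^ (2 * n) := by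
    intro n hn
    calc S n ≤ ∑' k : ℤ, M ^ (2 * n) * latCmp (l : ℝ) k :=
          Summable.tsum_le_tsum (hkey n hn) (hsumg n hn) (hsumh.mul_left _)
      _ = M ^ (2 * n) * C := tsum_mul_left
      _ = C * M ^ (2 * n) := mul_comm _ _
  -- lower bound on S
  have hlower : ∀ n : ℕ, 1 ≤ n → (1 / 4 : ℝ) * M ^ (2 * n) ≤ S n := by
    intro n hn
    rcases le_or_gt (z ^ 2 / ((l : ℝ) + 1)) (l : ℝ) with hbL | hLb
    · have hM : M = (l : ℝ) := max_eq_left hbL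
      calc (1 / 4 : ℝ) * M ^ (2 * n) = (1 / 4 : ℝ) * (l : ℝ) ^ (2 * n) := by rw [hM]
        _ ≤ latTerm z n (l : ℤ) := latTerm_lower_l l z hl h1 n
        _ ≤ S n := Summable.le_tsum (hsumg n hn) _ fun j _ => latTerm_nonneg z n j
    · have hM : M = z ^ 2 / ((l : ℝ) + 1) := max_eq_right hLb.le
      calc (1 / 4 : ℝ) * M ^ (2 * n)
          = (1 / 4 : ℝ) * (z ^ 2 / ((l : ℝ) + 1)) ^ (2 * n) := by rw [hM]
        _ ≤ latTerm z n ((l : ℤ) + 1) := latTerm_lower_l1 l z hl h1 h2 n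
        _ ≤ S n := Summable.le_tsum (hsumg n hn) _ fun j _ => latTerm_nonneg z n j
  -- the exponent
  set e : ℕ → ℝ := fun n => 1 / (2 * (n : ℝ)) with hedef
  have he0 : Tendsto e atTop (𝓝 0) := by
    have heq : e = fun n : ℕ => (1 / 2 : ℝ) * (1 / (n : ℝ)) := by
      funext n; simp only [hedef]; ring
    rw [heq]
    have := tendsto_one_div_atTop_nhds_zero_nat.const_mul (1 / 2 : ℝ)
    simpa using this
  have hcpow : ∀ c : ℝ, 0 < c → Tendsto (fun n => c ^ (e n)) atTop (𝓝 1) := by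
    intro c hc
    have h1' : Tendsto (fun n => Real.log c * e n) atTop (𝓝 (Real.log c * 0)) :=
      he0.const_mul _
    rw [mul_zero] at h1'
    have h2' : Tendsto (fun n => Real.exp (Real.log c * e n)) atTop (𝓝 (Real.exp 0)) :=
      (Real.continuous_exp.continuousAt.tendsto).comp h1'
    rw [Real.exp_zero] at h2'
    refine h2'.congr fun n => ?_
    rw [Real.rpow_def_of_pos hc]
  -- limits of the bounding sequences
  have hlowlim : Tendsto (fun n => ((1 / 4 : ℝ)) ^ (e n) * M) atTop (𝓝 M) := by
    have := (hcpow (1 / 4) (by norm_num)).mul_const M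
    simpa using this
  have huplim : Tendsto (fun n => C ^ (e n) * M) atTop (𝓝 M) := by
    have := (hcpow C hC0).mul_const M
    simpa using this
  -- key computation of roots of powers
  have hroot : ∀ n : ℕ, 1 ≤ n → (M ^ (2 * n) : ℝ) ^ (e n) = M := by
    intro n hn
    rw [← Real.rpow_natCast M (2 * n), ← Real.rpow_mul hM0.le]
    have hn0 : ((2 : ℝ) * n) ≠ 0 := by
      have : (1 : ℝ) ≤ (n : ℝ) := by exact_mod_cast hn
      positivity
    have : ((2 * n : ℕ) : ℝ) * e n = 1 := by
      simp only [hedef]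
      push_cast
      field_simp
    rw [this, Real.rpow_one]
  have hMn0 : ∀ n : ℕ, (0 : ℝ) ≤ M ^ (2 * n) := fun n => by positivity
  -- squeeze
  apply tendsto_of_tendsto_of_tendsto_of_le_of_le' hlowlim huplim
  · filter_upwards [eventually_ge_atTop 1] with n hn
    have hen : 0 ≤ e n := by
      simp only [hedef]
      positivity
    calc (1 / 4 : ℝ) ^ (e n) * M
        = (1 / 4 : ℝ) ^ (e n) * (M ^ (2 * n)) ^ (e n) := by rw [hroot n hn]
      _ = ((1 / 4 : ℝ) * M ^ (2 * n)) ^ (e n) :=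
          (Real.mul_rpow (by norm_num) (hMn0 n)).symm
      _ ≤ (S n) ^ (e n) :=
          Real.rpow_le_rpow (by positivity) (hlower n hn) hen
  · filter_upwards [eventually_ge_atTop 1] with n hn
    have hen : 0 ≤ e n := by
      simp only [hedef]
      positivity
    have hS0 : 0 ≤ S n := tsum_nonneg (latTerm_nonneg z n)
    calc (S n) ^ (e n)
        ≤ (C * M ^ (2 * n)) ^ (e n) :=
          Real.rpow_le_rpow hS0 (hupper n hn) hen
      _ = C ^ (e n) * (M ^ (2 * n)) ^ (e n) :=
          Real.mul_rpow hC0.le (hMn0 n)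
      _ = C ^ (e n) * M := by rw [hroot n hn]
end
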